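/- Let μ > 1 and let (g_n) be a nondecreasing sequence with g_1 = 1/μ, g_n → 1 and (1 − g_n)·ln(n) → 0. Then for every α < 1, the quantity f(α,n) = (2/n)·Σ_{k=1}^{⌊n/2⌋} (−1 + n^{α(2g_n − g_k − g_{n−k})}) tends to 0 as n → ∞. -/

import Mathlib

/-!
For `1 ≤ k ≤ n / 2` monotonicity makes the exponent gap `2 g n - g k - g (n - k)` nonnegative.
Split the sum at `K ≈ n ^ θ` with `θ = (1 - max α 0) / 2`. For `k > K` the gap is at most
`2 (1 - g K)`, and `(1 - g K) log n ≤ θ⁻¹ (1 - g K) log K → 0`, so these terms are uniformly `o(1)`.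
For `k ≤ K` (using `g 1 ≥ 0`) the gap is at most `1 + (1 - g ⌈n / 2⌉)`, so each term is
`O(n ^ max α 0)`, and after division by `n` the `K` of them contribute
`O(n ^ (θ + max α 0 - 1)) = o(1)`.
-/

open Filter Real

theorem abs_rpow_sub_one_le {x : ℝ} (hx : 1 ≤ x) (y : ℝ) : |x ^ y - 1| ≤ x ^ |y| - 1 := by
  rcases le_total 0 y with hy | hy
  · rw [abs_of_nonneg hy, abs_of_nonneg (sub_nonneg.2 (one_le_rpow hx hy))]
  · have ht : 1 ≤ x ^ (-y) := one_le_rpow hx (neg_nonneg.2 hy)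
    have hinv : (x ^ (-y))⁻¹ ≤ 1 := inv_le_one_of_one_le₀ ht
    rw [abs_of_nonpos hy, ← inv_inv (x ^ y), ← rpow_neg (by linarith),
      abs_of_nonpos (sub_nonpos.2 hinv)]
    nlinarith [mul_inv_cancel₀ (by linarith : x ^ (-y) ≠ 0),
      mul_nonneg (sub_nonneg.2 ht) (sub_nonneg.2 hinv)]

theorem abs_sum_Icc_le_of_split {t : ℕ → ℝ} {N K : ℕ} {A ε : ℝ} (hA : 0 ≤ A) (hε : 0 ≤ ε)
    (hsmall : ∀ k ∈ Finset.Icc 1 N, k ≤ K → |t k| ≤ A)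
    (hlarge : ∀ k ∈ Finset.Icc 1 N, K < k → |t k| ≤ ε) :
    |∑ k ∈ Finset.Icc 1 N, t k| ≤ K * A + N * ε := by
  set s := Finset.Icc 1 N
  have hcard_small : ((s.filter (· ≤ K)).card : ℝ) ≤ K := by
    have : s.filter (· ≤ K) ⊆ Finset.Icc 1 K := fun k hk => by
      simp only [s, Finset.mem_filter, Finset.mem_Icc] at hk ⊢; omega
    exact_mod_cast (Finset.card_le_card this).trans (by simp)
  have hcard_large : ((s.filter (¬ · ≤ K)).card : ℝ) ≤ N := by
    exact_mod_cast (Finset.card_filter_le _ _).trans (by simp [s])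
  calc |∑ k ∈ s, t k| ≤ ∑ k ∈ s, |t k| := Finset.abs_sum_le_sum_abs _ _
    _ = ∑ k ∈ s.filter (· ≤ K), |t k| + ∑ k ∈ s.filter (¬ · ≤ K), |t k| :=
        (Finset.sum_filter_add_sum_filter_not _ _ _).symm
    _ ≤ (s.filter (· ≤ K)).card • A + (s.filter (¬ · ≤ K)).card • ε := by
        refine add_le_add (Finset.sum_le_card_nsmul _ _ _ fun k hk => ?_)
          (Finset.sum_le_card_nsmul _ _ _ fun k hk => ?_) <;> rw [Finset.mem_filter] at hk
        · exact hsmall k hk.1 hk.2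
        · exact hlarge k hk.1 (not_le.1 hk.2)
    _ ≤ K * A + N * ε := by simp only [nsmul_eq_mul]; gcongr

theorem tendsto_natCast_rpow_of_tendsto_mul_log {e : ℕ → ℝ}
    (he : Tendsto (fun n => e n * log n) atTop (nhds 0)) :
    Tendsto (fun n : ℕ => (n : ℝ) ^ e n) atTop (nhds 1) := by
  have hexp := (continuous_exp.tendsto 0).comp he
  rw [exp_zero] at hexp
  refine hexp.congr' ?_
  filter_upwards [eventually_gt_atTop 0] with n hn
  rw [Function.comp_apply, rpow_def_of_pos (by exact_mod_cast hn), mul_comm]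

theorem tendsto_comp_mul_log_of_le_rpow {h : ℕ → ℝ} (hh : ∀ n, 0 ≤ h n)
    (hlog : Tendsto (fun n => h n * log n) atTop (nhds 0)) {K : ℕ → ℕ} {c : ℝ} (hc : 0 < c)
    (hK : ∀ᶠ n : ℕ in atTop, (n : ℝ) ≤ (K n : ℝ) ^ c) :
    Tendsto (fun n => h (K n) * log n) atTop (nhds 0) := by
  have hKtop : Tendsto K atTop atTop := by
    have hpow : Tendsto (fun n => (K n : ℝ) ^ c) atTop atTop :=
      tendsto_atTop_mono' _ hK tendsto_natCast_atTop_atTop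
    have := (tendsto_rpow_atTop (inv_pos.2 hc)).comp hpow
    refine tendsto_natCast_atTop_iff.1 (this.congr fun n => ?_)
    exact rpow_rpow_inv (Nat.cast_nonneg _) hc.ne'
  have hupper := (hlog.comp hKtop).const_mul c
  rw [mul_zero] at hupper
  refine squeeze_zero' (Eventually.of_forall fun n => ?_) ?_ hupper
  · exact mul_nonneg (hh _) (log_natCast_nonneg n)
  filter_upwards [hK, eventually_ge_atTop 1] with n hn hn1
  have hKpos : (0 : ℝ) < K n :=
    Nat.cast_pos.2 (Nat.pos_of_ne_zero fun h0 => by simp [h0, zero_rpow hc.ne'] at hn; omega)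
  have : log n ≤ c * log (K n) := by
    rw [← log_rpow hKpos]; exact log_le_log (by exact_mod_cast hn1) hn
  simp only [Function.comp_apply]
  nlinarith [hh (K n)]

theorem natCast_le_natCeil_rpow_rpow_inv {θ : ℝ} (hθ : 0 < θ) (n : ℕ) :
    (n : ℝ) ≤ (⌈(n : ℝ) ^ θ⌉₊ : ℝ) ^ θ⁻¹ := by
  calc (n : ℝ) = ((n : ℝ) ^ θ) ^ θ⁻¹ := (rpow_rpow_inv (Nat.cast_nonneg n) hθ.ne').symm
    _ ≤ (⌈(n : ℝ) ^ θ⌉₊ : ℝ) ^ θ⁻¹ := by gcongr; exact Nat.le_ceil _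

theorem tendsto_natCeil_rpow_mul_rpow_zero {θ b : ℝ} (hθ : 0 ≤ θ) (hθb : θ + b < 0) :
    Tendsto (fun n : ℕ => (⌈(n : ℝ) ^ θ⌉₊ : ℝ) * (n : ℝ) ^ b) atTop (nhds 0) := by
  have hlim : Tendsto (fun n : ℕ => 2 * (n : ℝ) ^ (θ + b)) atTop (nhds 0) := by
    have := (tendsto_rpow_neg_atTop (neg_pos.2 hθb)).comp tendsto_natCast_atTop_atTop
    simpa using this.const_mul 2
  refine squeeze_zero' (Eventually.of_forall fun n => by positivity) ?_ hlim
  filter_upwards [eventually_ge_atTop 1] with n hn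
  have hn' : (1 : ℝ) ≤ n := by exact_mod_cast hn
  have hceil : (⌈(n : ℝ) ^ θ⌉₊ : ℝ) ≤ 2 * (n : ℝ) ^ θ := by
    linarith [Nat.ceil_lt_add_one (rpow_nonneg (Nat.cast_nonneg n) θ), one_le_rpow hn' hθ]
  rw [rpow_add (by linarith), ← mul_assoc]
  gcongr

theorem natCast_le_sub_div_two_sq {n : ℕ} (hn : 3 ≤ n) :
    (n : ℝ) ≤ ((n - n / 2 : ℕ) : ℝ) ^ (2 : ℝ) := by
  rw [rpow_two, sq]
  have h2 : (2 : ℝ) ≤ ((n - n / 2 : ℕ) : ℝ) := by exact_mod_cast (show 2 ≤ n - n / 2 by omega)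
  have hn : (n : ℝ) ≤ 2 * ((n - n / 2 : ℕ) : ℝ) := by
    exact_mod_cast (show n ≤ 2 * (n - n / 2) by omega)
  nlinarith

namespace SecondMoment

def gap (g : ℕ → ℝ) (n k : ℕ) : ℝ := 2 * g n - g k - g (n - k)

noncomputable def error (g : ℕ → ℝ) (α : ℝ) (n : ℕ) : ℝ :=
  (2 / (n : ℝ)) * ∑ k ∈ Finset.Icc 1 (n / 2), (-1 + (n : ℝ) ^ (α * gap g n k))

variable {g : ℕ → ℝ}

theorem gap_nonneg (hmono : Monotone g) {n k : ℕ} (hk : k ≤ n) : 0 ≤ gap g n k := by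
  unfold gap
  linarith [hmono hk, hmono (Nat.sub_le n k)]

theorem gap_le_of_le (hmono : Monotone g) (hle : ∀ n, g n ≤ 1) {n k K : ℕ} (hKk : K ≤ k)
    (hkn : k ≤ n / 2) : gap g n k ≤ 2 * (1 - g K) := by
  unfold gap
  linarith [hle n, hmono hKk, hmono (show K ≤ n - k by omega)]

theorem gap_le (hmono : Monotone g) (hle : ∀ n, g n ≤ 1) (hg1 : 0 ≤ g 1) {n k : ℕ}
    (hk : 1 ≤ k) (hkn : k ≤ n / 2) :
    gap g n k ≤ 1 + (1 - g (n - n / 2)) := by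
  unfold gap
  linarith [hle n, hmono hk, hmono (show n - n / 2 ≤ n - k by omega)]

theorem abs_rpow_gap_sub_one_le_of_le (hmono : Monotone g) (hle : ∀ n, g n ≤ 1) (α : ℝ)
    {n k K : ℕ} (hn : 1 ≤ n) (hKk : K ≤ k) (hkn : k ≤ n / 2) :
    |-1 + (n : ℝ) ^ (α * gap g n k)| ≤ (n : ℝ) ^ (2 * |α| * (1 - g K)) - 1 := by
  have hn' : (1 : ℝ) ≤ n := by exact_mod_cast hn
  rw [neg_add_eq_sub]
  refine (abs_rpow_sub_one_le hn' _).trans (sub_le_sub_right (rpow_le_rpow_of_exponent_le hn' ?_) 1)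
  rw [abs_mul, abs_of_nonneg (gap_nonneg hmono (by omega))]
  linarith [mul_le_mul_of_nonneg_left (gap_le_of_le hmono hle hKk hkn) (abs_nonneg α)]

theorem abs_rpow_gap_sub_one_le (hmono : Monotone g) (hle : ∀ n, g n ≤ 1) (hg1 : 0 ≤ g 1)
    (α : ℝ) {n k : ℕ} (hn : 1 ≤ n) (hk : 1 ≤ k) (hkn : k ≤ n / 2) :
    |-1 + (n : ℝ) ^ (α * gap g n k)| ≤
      (n : ℝ) ^ max α 0 * (1 + (n : ℝ) ^ (max α 0 * (1 - g (n - n / 2)))) := by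
  have hn' : (1 : ℝ) ≤ n := by exact_mod_cast hn
  have hgap := gap_nonneg hmono (show k ≤ n by omega)
  have hexp : α * gap g n k ≤ max α 0 + max α 0 * (1 - g (n - n / 2)) :=
    calc α * gap g n k ≤ max α 0 * gap g n k :=
          mul_le_mul_of_nonneg_right (le_max_left α 0) hgap
      _ ≤ max α 0 * (1 + (1 - g (n - n / 2))) :=
          mul_le_mul_of_nonneg_left (gap_le hmono hle hg1 hk hkn) (le_max_right α 0)
      _ = max α 0 + max α 0 * (1 - g (n - n / 2)) := by ring
  have hpow := rpow_le_rpow_of_exponent_le hn' hexp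
  rw [rpow_add (by linarith)] at hpow
  have hone := one_le_rpow hn' (le_max_right α 0)
  have hnonneg : 0 ≤ (n : ℝ) ^ (α * gap g n k) := rpow_nonneg (by linarith) _
  rw [abs_le]
  constructor <;> nlinarith

theorem abs_error_le (hmono : Monotone g) (hle : ∀ n, g n ≤ 1)
    (hg1 : 0 ≤ g 1) (α : ℝ) {n : ℕ} (hn : 1 ≤ n) (K : ℕ) :
    |error g α n| ≤
      2 * (K * (n : ℝ) ^ (max α 0 - 1)) * (1 + (n : ℝ) ^ (max α 0 * (1 - g (n - n / 2)))) +
        ((n : ℝ) ^ (2 * |α| * (1 - g K)) - 1) := by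
  have hn' : (1 : ℝ) ≤ n := by exact_mod_cast hn
  set A := (n : ℝ) ^ max α 0 * (1 + (n : ℝ) ^ (max α 0 * (1 - g (n - n / 2))))
  set ε := (n : ℝ) ^ (2 * |α| * (1 - g K)) - 1
  have hA : 0 ≤ A := by positivity
  have hε : 0 ≤ ε :=
    sub_nonneg.2 (one_le_rpow hn' (mul_nonneg (by positivity) (by linarith [hle K])))
  have hsum := abs_sum_Icc_le_of_split (t := fun k => -1 + (n : ℝ) ^ (α * gap g n k))
    (K := K) hA hε
    (fun k hk _ => abs_rpow_gap_sub_one_le hmono hle hg1 α hn (Finset.mem_Icc.1 hk).1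
      (Finset.mem_Icc.1 hk).2)
    (fun k hk hkK => abs_rpow_gap_sub_one_le_of_le hmono hle α hn hkK.le (Finset.mem_Icc.1 hk).2)
  have hhalf : ((n / 2 : ℕ) : ℝ) ≤ n / 2 := Nat.cast_div_le
  calc |error g α n| = 2 / n * |∑ k ∈ Finset.Icc 1 (n / 2),
        (-1 + (n : ℝ) ^ (α * gap g n k))| := by
        rw [error, abs_mul, abs_of_nonneg (by positivity)]
    _ ≤ 2 / n * (K * A + n / 2 * ε) := by gcongr; exact hsum.trans (by gcongr)
    _ = _ := by
        simp only [A, ε]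
        rw [rpow_sub_one (by positivity)]
        field_simp

end SecondMoment

/-- Let `μ > 1` and `(g n)` nondecreasing with `g 1 = 1/μ`, `g n → 1` and
`(1 − g n)·log n → 0`. Then for every `α < 1` the quantity
`f(α,n) = (2/n)·Σ_{k=1}^{⌊n/2⌋} (−1 + n^(α(2 g n − g k − g (n−k))))` tends to `0`. -/
theorem second_moment_error_tendsto_zero
    (μ : ℝ) (hμ : 1 < μ)
    (g : ℕ → ℝ) (hmono : Monotone g) (hg1 : g 1 = 1 / μ)
    (hglim : Tendsto g atTop (nhds 1))
    (hglog : Tendsto (fun n : ℕ => (1 - g n) * Real.log n) atTop (nhds 0)) :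
    ∀ α : ℝ, α < 1 →
      Tendsto (fun n : ℕ =>
          (2 / (n : ℝ)) * ∑ k ∈ Finset.Icc 1 (n / 2),
            (-1 + (n : ℝ) ^ (α * (2 * g n - g k - g (n - k)))))
        atTop (nhds 0) := by
  intro α hα
  have hle : ∀ n, g n ≤ 1 := hmono.ge_of_tendsto hglim
  have hdefect : ∀ n, 0 ≤ 1 - g n := fun n => sub_nonneg.2 (hle n)
  have hg1_nonneg : 0 ≤ g 1 := hg1 ▸ one_div_nonneg.2 (by linarith)
  have hα_pos_part : max α 0 < 1 := max_lt hα one_pos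
  set θ := (1 - max α 0) / 2
  have hθ : 0 < θ := by simp only [θ]; linarith
  set K : ℕ → ℕ := fun n => ⌈(n : ℝ) ^ θ⌉₊
  have hK := tendsto_comp_mul_log_of_le_rpow hdefect hglog (K := K) (inv_pos.2 hθ)
    (Eventually.of_forall (natCast_le_natCeil_rpow_rpow_inv hθ))
  have hhalf := tendsto_comp_mul_log_of_le_rpow hdefect hglog (K := fun n => n - n / 2) two_pos
    ((eventually_ge_atTop 3).mono fun n => natCast_le_sub_div_two_sq)
  have hsmall :=
    tendsto_natCeil_rpow_mul_rpow_zero hθ.le (b := max α 0 - 1) (by simp only [θ]; linarith)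
  have hD := tendsto_natCast_rpow_of_tendsto_mul_log
    (e := fun n => max α 0 * (1 - g (n - n / 2)))
    (by simpa [mul_assoc] using hhalf.const_mul (max α 0))
  have hε := tendsto_natCast_rpow_of_tendsto_mul_log
    (e := fun n => 2 * |α| * (1 - g (K n))) (by simpa [mul_assoc] using hK.const_mul (2 * |α|))
  have hbound := ((hsmall.const_mul 2).mul (hD.const_add 1)).add (hε.sub_const 1)
  rw [mul_zero, zero_mul, sub_self, add_zero] at hbound
  refine squeeze_zero_norm' ?_ hbound
  filter_upwards [eventually_ge_atTop 1] with n hn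
  exact SecondMoment.abs_error_le hmono hle hg1_nonneg α hn (K n)
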